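/- Let d(h,k) be the number of occurrences of the letter h in the word ψ(0,k). Then for all natural numbers h ≤ k, d(h,k) = 2^{k−h}·k!/h!. In particular d(k,k) = 1 and d(h,k) = 2k·d(h,k−1) for 0 ≤ h < k. -/
import Mathlib


/-- S⁻¹: move the last letter of a nonempty word to the front. -/
def sInv (w : List ℕ) : List ℕ := w.rotate (w.length - 1)

/-- Apply a substitution `f` letterwise to a word (the morphism determined by `f`). -/
def applyM (f : ℕ → List ℕ) (w : List ℕ) : List ℕ := (w.map f).flatten

/-- Fuel-indexed approximation of the morphism φ: `phiAux n` agrees with φ on all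
letters `c < n`.  (Computing φ^c(00) only uses φ on letters smaller than `c`, so the
recursion is well-founded in the fuel.) -/
def phiAux : ℕ → ℕ → List ℕ
  | 0, _ => []
  | n + 1, c => sInv ((applyM (phiAux n))^[c] [0, 0]) ++ [c + 1]

/-- The morphism φ on letters: φ(h) = S⁻¹(φ^h(00))·(h+1).
In particular φ(0) = 001 and φ(1) = 1001002. -/
def phi (c : ℕ) : List ℕ := phiAux (c + 1) c

/-- The morphism φ on words. -/
def phiW (w : List ℕ) : List ℕ := applyM phi w

/-- ψ(h,k) = φ^(k−h)(h); in particular ψ(0,k) = φ^k(0). -/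
def psi (h k : ℕ) : List ℕ := phiW^[k - h] [h]

/-- d(h,k): the number of occurrences of the letter `h` in the word ψ(0,k). -/
def d (h k : ℕ) : ℕ := (psi 0 k).count h

lemma applyM_append (f : ℕ → List ℕ) (u v : List ℕ) :
    applyM f (u ++ v) = applyM f u ++ applyM f v := by
  simp [applyM]

lemma phiW_iter_append (m : ℕ) (u v : List ℕ) :
    phiW^[m] (u ++ v) = phiW^[m] u ++ phiW^[m] v := by
  induction m generalizing u v with
  | zero => rfl
  | succ m ih =>
      rw [Function.iterate_succ_apply, Function.iterate_succ_apply,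
        Function.iterate_succ_apply]
      show phiW^[m] (applyM phi (u ++ v)) = _
      rw [applyM_append]
      exact ih _ _

lemma phi_struct : ∀ c : ℕ,
    (∀ n, c < n → phiAux n c = phi c) ∧ (∀ x ∈ phi c, x ≤ c + 1) ∧
    phi c = sInv (phiW^[c] [0, 0]) ++ [c + 1] := by
  intro c
  induction c using Nat.strong_induction_on with
  | _ c IH =>
  have claim : ∀ j, j ≤ c → ∀ m, c ≤ m →
      (applyM (phiAux m))^[j] [0, 0] = phiW^[j] [0, 0] ∧
      (∀ x ∈ phiW^[j] [0, 0], x ≤ j) := by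
    intro j
    induction j with
    | zero => intro _ m _; exact ⟨rfl, by simp⟩
    | succ j ihj =>
      intro hj m hm
      obtain ⟨he, hb⟩ := ihj (le_of_lt (Nat.lt_of_succ_le hj)) m hm
      have hmem : ∀ x ∈ phiW^[j] [0, 0], x < c :=
        fun x hx => lt_of_le_of_lt (hb x hx) (Nat.lt_of_succ_le hj)
      constructor
      · rw [Function.iterate_succ_apply', Function.iterate_succ_apply', he]
        show applyM (phiAux m) _ = applyM phi _
        unfold applyM
        congr 1
        apply List.map_congr_left
        intro x hx
        exact (IH x (hmem x hx)).1 m (lt_of_lt_of_le (hmem x hx) hm)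
      · rw [Function.iterate_succ_apply']
        intro x hx
        rw [show phiW (phiW^[j] [0, 0]) = applyM phi (phiW^[j] [0, 0]) from rfl,
          applyM, List.mem_flatten] at hx
        obtain ⟨l, hl, hxl⟩ := hx
        rw [List.mem_map] at hl
        obtain ⟨y, hy, rfl⟩ := hl
        have := (IH y (hmem y hy)).2.1 x hxl
        have := hb y hy
        omega
  have key : ∀ m, c ≤ m → phiAux (m + 1) c = sInv (phiW^[c] [0, 0]) ++ [c + 1] := by
    intro m hm
    show sInv ((applyM (phiAux m))^[c] [0, 0]) ++ [c + 1] = _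
    rw [(claim c le_rfl m hm).1]
  have hphi : phi c = sInv (phiW^[c] [0, 0]) ++ [c + 1] := key c le_rfl
  refine ⟨?_, ?_, hphi⟩
  · intro n hn
    match n, hn with
    | m + 1, hn => rw [key m (Nat.lt_succ_iff.mp hn), hphi]
  · intro x hx
    rw [hphi, List.mem_append] at hx
    rcases hx with hx | hx
    · have : x ∈ phiW^[c] [0, 0] := by
        rw [sInv, List.mem_rotate] at hx; exact hx
      have := (claim c le_rfl c le_rfl).2 x this
      omega
    · simp at hx; omega

lemma phi_eq (c : ℕ) : phi c = sInv (phiW^[c] [0, 0]) ++ [c + 1] := (phi_struct c).2.2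

lemma count_applyM (f : ℕ → List ℕ) (h : ℕ) (w : List ℕ) :
    (applyM f w).count h = (w.map (fun x => (f x).count h)).sum := by
  induction w with
  | nil => rfl
  | cons a w ih =>
      show ((f a) ++ applyM f w).count h = _
      rw [List.count_append, ih]
      simp

lemma phiW_iter_nil (m : ℕ) : phiW^[m] [] = [] := by
  induction m with
  | zero => rfl
  | succ m ih => rw [Function.iterate_succ_apply]; exact ih

lemma iter_single (m : ℕ) (w : List ℕ) :
    phiW^[m] w = applyM (fun x => phiW^[m] [x]) w := by
  induction w with
  | nil => rw [phiW_iter_nil]; rfl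
  | cons a w ih =>
      have : (a :: w) = [a] ++ w := rfl
      rw [this, phiW_iter_append, ih]
      show _ = applyM _ ([a] ++ w)
      rw [applyM_append]
      congr 1
      simp [applyM]

lemma count_iter_perm (m h : ℕ) {u v : List ℕ} (p : List.Perm u v) :
    (phiW^[m] u).count h = (phiW^[m] v).count h := by
  rw [iter_single, iter_single, count_applyM, count_applyM]
  exact (p.map _).sum_eq

lemma rec1 (m c h : ℕ) :
    (phiW^[m + 1] [c]).count h
      = 2 * (phiW^[m + c] [0]).count h + (phiW^[m] [c + 1]).count h := by
  have h1 : phiW [c] = phi c := by simp [phiW, applyM]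
  rw [Function.iterate_succ_apply, h1, phi_eq c, phiW_iter_append, List.count_append]
  have h2 : (phiW^[m] (sInv (phiW^[c] [0, 0]))).count h
      = (phiW^[m] (phiW^[c] [0, 0])).count h :=
    count_iter_perm _ _ (List.rotate_perm _ _)
  rw [h2, ← Function.iterate_add_apply]
  have h3 : ([0, 0] : List ℕ) = [0] ++ [0] := rfl
  rw [h3, phiW_iter_append, List.count_append]
  ring

lemma rec2 (h : ℕ) : ∀ m c : ℕ, (phiW^[m + 1] [c]).count h
    = 2 * (m + 1) * (phiW^[m + c] [0]).count h + (if c + m + 1 = h then 1 else 0) := by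
  intro m
  induction m with
  | zero =>
      intro c
      rw [rec1]
      simp [List.count_singleton', eq_comm]
  | succ m ih =>
      intro c
      rw [rec1, ih (c + 1)]
      have h1 : m + (c + 1) = m + 1 + c := by ring
      have h2 : c + 1 + m + 1 = c + (m + 1) + 1 := by ring
      rw [h1, h2]
      ring

lemma d_eq (h k : ℕ) : d h k = (phiW^[k] [0]).count h := by simp [d, psi]

lemma d_rec (h k : ℕ) :
    d h (k + 1) = 2 * (k + 1) * d h k + (if k + 1 = h then 1 else 0) := by
  rw [d_eq, d_eq, rec2 h k 0]
  norm_num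

lemma d_vanish (h : ℕ) : ∀ n, n < h → d h n = 0 := by
  intro n
  induction n with
  | zero => intro hn; rw [d_eq]; simp [List.count_singleton']; omega
  | succ n ih =>
      intro hn
      rw [d_rec, ih (by omega), if_neg (by omega)]
      ring

lemma d_diag (h : ℕ) : d h h = 1 := by
  cases h with
  | zero => rw [d_eq]; simp
  | succ h => rw [d_rec, d_vanish (h + 1) h (by omega), if_pos rfl]; ring

lemma d_mult (h : ℕ) : ∀ k, h ≤ k → d h k * Nat.factorial h = 2 ^ (k - h) * Nat.factorial k := by
  intro k
  induction k with
  | zero =>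
      intro hk
      interval_cases h
      simp [d_diag]
  | succ k ih =>
      intro hk
      rcases Nat.eq_or_lt_of_le hk with heq | hlt
      · subst heq; simp [d_diag]
      · have hk' : h ≤ k := by omega
        rw [d_rec, if_neg (by omega)]
        have h1 : k + 1 - h = (k - h) + 1 := by omega
        rw [h1, pow_succ, Nat.factorial_succ, add_zero]
        calc 2 * (k + 1) * d h k * Nat.factorial h
            = (d h k * Nat.factorial h) * (2 * (k + 1)) := by ring
          _ = (2 ^ (k - h) * Nat.factorial k) * (2 * (k + 1)) := by rw [ih hk']
          _ = 2 ^ (k - h) * 2 * ((k + 1) * Nat.factorial k) := by ring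


/-- For h ≤ k, d(h,k) = 2^(k−h)·k!/h!; in particular d(k,k) = 1 and
d(h,k) = 2k·d(h,k−1) for h < k. -/
theorem d_formula :
    (∀ h k : ℕ, h ≤ k → d h k = 2 ^ (k - h) * Nat.factorial k / Nat.factorial h) ∧
    (∀ k : ℕ, d k k = 1) ∧
    (∀ h k : ℕ, h < k → d h k = 2 * k * d h (k - 1)) := by
  refine ⟨?_, fun k => d_diag k, ?_⟩
  · intro h k hk
    exact (Nat.div_eq_of_eq_mul_left (Nat.factorial_pos h) (d_mult h k hk).symm).symm
  · intro h k hk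
    obtain ⟨n, rfl⟩ : ∃ n, k = n + 1 := ⟨k - 1, by omega⟩
    rw [d_rec, if_neg (by omega)]
    simp
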